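/- arXiv:1510.00735 — 3 statements merged into one kernel-verified Lean document; each statement's English description precedes it below -/
import Mathlib

section
/- For all elements A and B of any commutative ring, one has the identity (6A² − 4AB + 4B²)³ = (3A² + 5AB − 5B²)³ + (4A² − 4AB + 6B²)³ + (5A² − 5AB − 3B²)³. -/
theorem ramanujan_1913_identity {R : Type*} [CommRing R] (A B : R) :
    (6 * A ^ 2 - 4 * A * B + 4 * B ^ 2) ^ 3 =
      (3 * A ^ 2 + 5 * A * B - 5 * B ^ 2) ^ 3 +
        (4 * A ^ 2 - 4 * A * B + 6 * B ^ 2) ^ 3 +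
          (5 * A ^ 2 - 5 * A * B - 3 * B ^ 2) ^ 3 := by
  ring
end

section
/- For all elements M and P of any commutative ring, one has the identity (M⁷ − 3M⁴(1 + P) + M(3(1 + P)² − 1))³ + (2M⁶ − 3M³(1 + 2P) + (1 + 3P + 3P²))³ + (M⁶ − (1 + 3P + 3P²))³ = (M⁷ − 3M⁴P + M(3P² − 1))³. -/
theorem ramanujan_entry_20_iii {R : Type*} [CommRing R] (M P : R) :
    (M ^ 7 - 3 * M ^ 4 * (1 + P) + M * (3 * (1 + P) ^ 2 - 1)) ^ 3 +
        (2 * M ^ 6 - 3 * M ^ 3 * (1 + 2 * P) + (1 + 3 * P + 3 * P ^ 2)) ^ 3 +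
          (M ^ 6 - (1 + 3 * P + 3 * P ^ 2)) ^ 3 =
      (M ^ 7 - 3 * M ^ 4 * P + M * (3 * P ^ 2 - 1)) ^ 3 := by
  ring
end

section
/- Let α, β, γ, λ be elements of a commutative ring satisfying α² + αβ + β² = 3λγ². Then (α + λ²γ)³ + (λβ + γ)³ = (λα + γ)³ + (β + λ²γ)³. -/
theorem ramanujan_euler_parametrization {R : Type*} [CommRing R] (α β γ lam : R)
    (h : α ^ 2 + α * β + β ^ 2 = 3 * lam * γ ^ 2) :
    (α + lam ^ 2 * γ) ^ 3 + (lam * β + γ) ^ 3 =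
      (lam * α + γ) ^ 3 + (β + lam ^ 2 * γ) ^ 3 := by
  linear_combination (α - β) * (1 - lam ^ 3) * h
end
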